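/- The Jordanian R-matrix is obtained from the standard q-deformed R-matrix by a singular contraction limit: with g(η) = [[1,η],[0,1]] and η = h/(1-q), the transformed matrix (g(η)⊗g(η))⁻¹ · R_q · (g(η)⊗g(η)) converges, as q → 1 (q ≠ 1, over ℝ), to a 4×4 matrix R which satisfies the quantum Yang–Baxter equation and the triangularity condition R·(PRP) = I₄. -/

import Mathlib

open Matrix Filter

/-- The 4×4 flip (permutation) matrix `P`, with `P(eᵢ⊗eⱼ) = eⱼ⊗eᵢ`. -/
def P4 (K : Type*) [CommRing K] : Matrix (Fin 4) (Fin 4) K :=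
  !![1,0,0,0; 0,0,1,0; 0,1,0,0; 0,0,0,1]

/-- `R₁₂ = R ⊗ I₂` as an 8×8 matrix (Kronecker product, row-major encoding). -/
def M12 {K : Type*} [CommRing K] (R : Matrix (Fin 4) (Fin 4) K) :
    Matrix (Fin 8) (Fin 8) K :=
  Matrix.of fun i j =>
    R ⟨(i : ℕ) / 2, by omega⟩ ⟨(j : ℕ) / 2, by omega⟩ *
      (if (i : ℕ) % 2 = (j : ℕ) % 2 then 1 else 0)

/-- `R₂₃ = I₂ ⊗ R` as an 8×8 matrix. -/
def M23 {K : Type*} [CommRing K] (R : Matrix (Fin 4) (Fin 4) K) :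
    Matrix (Fin 8) (Fin 8) K :=
  Matrix.of fun i j =>
    (if (i : ℕ) / 4 = (j : ℕ) / 4 then 1 else 0) *
      R ⟨(i : ℕ) % 4, by omega⟩ ⟨(j : ℕ) % 4, by omega⟩

/-- `R₁₃ = (I₂⊗P)(R⊗I₂)(I₂⊗P)`. -/
def M13 {K : Type*} [CommRing K] (R : Matrix (Fin 4) (Fin 4) K) :
    Matrix (Fin 8) (Fin 8) K :=
  M23 (P4 K) * M12 R * M23 (P4 K)

/-- The quantum Yang–Baxter equation `R₁₂R₁₃R₂₃ = R₂₃R₁₃R₁₂`. -/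
def QYBE {K : Type*} [CommRing K] (R : Matrix (Fin 4) (Fin 4) K) : Prop :=
  M12 R * M13 R * M23 R = M23 R * M13 R * M12 R

/-- The Kronecker product `g ⊗ g` of a 2×2 matrix with itself. -/
def GG {K : Type*} [CommRing K] (g : Matrix (Fin 2) (Fin 2) K) :
    Matrix (Fin 4) (Fin 4) K :=
  Matrix.of fun i j =>
    g ⟨(i : ℕ) / 2, by omega⟩ ⟨(j : ℕ) / 2, by omega⟩ *
      g ⟨(i : ℕ) % 2, by omega⟩ ⟨(j : ℕ) % 2, by omega⟩

/-- The standard one-parameter quantum R-matrix. -/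
def Rq {K : Type*} [Field K] (q : K) : Matrix (Fin 4) (Fin 4) K :=
  !![q,0,0,0; 0,1,q - q⁻¹,0; 0,0,1,0; 0,0,0,q]

/-- The Jordanian (h-deformed) R-matrix. -/
def Rh {K : Type*} [CommRing K] (h : K) : Matrix (Fin 4) (Fin 4) K :=
  !![1,-h,h,h^2; 0,1,0,h; 0,0,1,-h; 0,0,0,1]

/-- The contraction matrix `g(η) = [[1,η],[0,1]]`. -/
def gmat {K : Type*} [CommRing K] (η : K) : Matrix (Fin 2) (Fin 2) K :=
  !![1,η; 0,1]


/-!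
Write `G(η) = g(η) ⊗ g(η)`. Since `η ↦ g(η)` is a one-parameter group and `g ↦ g ⊗ g` is
multiplicative, `G(η)⁻¹ = G(-η)`, and conjugating `R_q` by `G(η)` gives entries that involve
`η` only through `η (q - 1)`, up to powers of `q`. With `η = h/(1-q)` this is `-h`, so the
conjugated matrix extends continuously to `q = 1`, where it is `jordanR h`. The Yang–Baxter
equation and triangularity of `jordanR h` are then polynomial identities in `h`.
-/

open Topology

variable {K : Type*}

section GroupLaw

variable [CommRing K]

lemma GG_mul (A B : Matrix (Fin 2) (Fin 2) K) : GG (A * B) = GG A * GG B := by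
  ext i j
  fin_cases i <;> fin_cases j <;> simp [GG, mul_apply, Fin.sum_univ_four] <;> ring

lemma GG_one : GG (1 : Matrix (Fin 2) (Fin 2) K) = 1 := by
  ext i j
  fin_cases i <;> fin_cases j <;> simp [GG, one_apply]

lemma gmat_add (a b : K) : gmat (a + b) = gmat a * gmat b := by
  ext i j
  fin_cases i <;> fin_cases j <;> simp [gmat, add_comm]

lemma gmat_zero : gmat (0 : K) = 1 := by
  ext i j
  fin_cases i <;> fin_cases j <;> simp [gmat, one_apply]

lemma inv_GG_gmat (η : K) : (GG (gmat η))⁻¹ = GG (gmat (-η)) :=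
  inv_eq_left_inv <| by rw [← GG_mul, ← gmat_add, neg_add_cancel, gmat_zero, GG_one]

lemma GG_gmat (η : K) :
    GG (gmat η) = !![1, η, η, η ^ 2; 0, 1, 0, η; 0, 0, 1, η; 0, 0, 0, 1] := by
  ext i j
  fin_cases i <;> fin_cases j <;> simp [GG, gmat, sq]

end GroupLaw

/-- `Rh h` with the signs of the entries `(1,3)` and `(2,3)` reversed. -/
def jordanR [CommRing K] (h : K) : Matrix (Fin 4) (Fin 4) K :=
  !![1, -h, h, h ^ 2; 0, 1, 0, -h; 0, 0, 1, h; 0, 0, 0, 1]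

def contractedRq [Field K] (h q : K) : Matrix (Fin 4) (Fin 4) K :=
  !![q, -h, h / q, h ^ 2 / q; 0, 1, q - q⁻¹, -h / q; 0, 0, 1, h; 0, 0, 0, q]

lemma contractedRq_one [Field K] (h : K) : contractedRq h 1 = jordanR h := by
  simp [contractedRq, jordanR]

lemma inv_GG_gmat_mul_Rq_mul_GG_gmat [Field K] (h : K) {q : K} (hq₀ : q ≠ 0) (hq₁ : q ≠ 1) :
    (GG (gmat (h / (1 - q))))⁻¹ * Rq q * GG (gmat (h / (1 - q))) = contractedRq h q := by
  have : 1 - q ≠ 0 := sub_ne_zero.2 hq₁.symm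
  rw [inv_GG_gmat, GG_gmat, GG_gmat]
  simp only [even_two, Even.neg_pow, Rq, cons_mul, Nat.succ_eq_add_one, Nat.reduceAdd, vecMul_cons,
    head_cons, one_smul, tail_cons, neg_smul, smul_cons, smul_eq_mul, mul_zero, mul_one, smul_empty,
    neg_cons, neg_zero, neg_empty, empty_vecMul, add_zero, add_cons, zero_add, empty_add_empty,
    zero_smul, empty_mul, Equiv.symm_apply_apply, contractedRq, EmbeddingLike.apply_eq_iff_eq,
    vecCons_inj, and_true, true_and]
  and_intros <;> field_simp <;> ring

lemma continuousAt_contractedRq [Field K] [TopologicalSpace K] [IsTopologicalDivisionRing K]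
    (h : K) : ContinuousAt (contractedRq h) 1 := by
  refine continuousAt_pi.2 fun i => continuousAt_pi.2 fun j => ?_
  fin_cases i <;> fin_cases j <;> simp [contractedRq] <;> fun_prop (disch := exact one_ne_zero)

theorem tendsto_inv_GG_gmat_mul_Rq_mul_GG_gmat [Field K] [TopologicalSpace K]
    [IsTopologicalDivisionRing K] [T1Space K] (h : K) :
    Tendsto (fun q => (GG (gmat (h / (1 - q))))⁻¹ * Rq q * GG (gmat (h / (1 - q))))
      (𝓝[≠] 1) (𝓝 (jordanR h)) := by
  have hlim : Tendsto (contractedRq h) (𝓝[≠] 1) (𝓝 (jordanR h)) :=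
    contractedRq_one h ▸ (continuousAt_contractedRq h).tendsto.mono_left nhdsWithin_le_nhds
  refine hlim.congr' ?_
  filter_upwards [self_mem_nhdsWithin,
    nhdsWithin_le_nhds (eventually_ne_nhds (one_ne_zero (α := K)))] with q hq₁ hq₀
  exact (inv_GG_gmat_mul_Rq_mul_GG_gmat h hq₀ hq₁).symm

section YangBaxter

variable [CommRing K]

lemma jordanR_mul_P4_mul_jordanR_mul_P4 (h : K) : jordanR h * (P4 K * jordanR h * P4 K) = 1 := by
  ext i j
  fin_cases i <;> fin_cases j <;> simp [jordanR, P4, one_apply, sq]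

/-- On the index `4a + 2b + c` of `K² ⊗ K² ⊗ K²`, this exchanges `b` and `c`. -/
def flip23 : Equiv.Perm (Fin 8) := Equiv.swap 1 2 * Equiv.swap 5 6

lemma M23_P4 : M23 (P4 K) = flip23.toPEquiv.toMatrix := by
  ext i j
  fin_cases i <;> fin_cases j <;>
    simp [M23, P4, flip23, PEquiv.toMatrix_apply, Equiv.swap_apply_of_ne_of_ne]

lemma M13_eq_submatrix (R : Matrix (Fin 4) (Fin 4) K) :
    M13 R = (M12 R).submatrix flip23 flip23 := by
  have flip23_symm : flip23.symm = flip23 := by decide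
  rw [M13, M23_P4, PEquiv.toMatrix_toPEquiv_mul, PEquiv.mul_toMatrix_toPEquiv,
    submatrix_submatrix, flip23_symm]
  rfl

lemma M12_jordanR (h : K) : M12 (jordanR h) =
    !![1, 0, -h, 0, h, 0, h ^ 2, 0;
       0, 1, 0, -h, 0, h, 0, h ^ 2;
       0, 0, 1, 0, 0, 0, -h, 0;
       0, 0, 0, 1, 0, 0, 0, -h;
       0, 0, 0, 0, 1, 0, h, 0;
       0, 0, 0, 0, 0, 1, 0, h;
       0, 0, 0, 0, 0, 0, 1, 0;
       0, 0, 0, 0, 0, 0, 0, 1] := by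
  ext i j
  fin_cases i <;> fin_cases j <;> simp [M12, jordanR]

lemma M23_jordanR (h : K) : M23 (jordanR h) =
    !![1, -h, h, h ^ 2, 0, 0, 0, 0;
       0, 1, 0, -h, 0, 0, 0, 0;
       0, 0, 1, h, 0, 0, 0, 0;
       0, 0, 0, 1, 0, 0, 0, 0;
       0, 0, 0, 0, 1, -h, h, h ^ 2;
       0, 0, 0, 0, 0, 1, 0, -h;
       0, 0, 0, 0, 0, 0, 1, h;
       0, 0, 0, 0, 0, 0, 0, 1] := by
  ext i j
  fin_cases i <;> fin_cases j <;> simp [M23, jordanR]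

lemma M13_jordanR (h : K) : M13 (jordanR h) =
    !![1, -h, 0, 0, h, h ^ 2, 0, 0;
       0, 1, 0, 0, 0, -h, 0, 0;
       0, 0, 1, -h, 0, 0, h, h ^ 2;
       0, 0, 0, 1, 0, 0, 0, -h;
       0, 0, 0, 0, 1, h, 0, 0;
       0, 0, 0, 0, 0, 1, 0, 0;
       0, 0, 0, 0, 0, 0, 1, h;
       0, 0, 0, 0, 0, 0, 0, 1] := by
  rw [M13_eq_submatrix, M12_jordanR]
  ext i j
  fin_cases i <;> fin_cases j <;> simp [flip23, Equiv.swap_apply_of_ne_of_ne]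

theorem qybe_jordanR (h : K) : QYBE (jordanR h) := by
  rw [QYBE, M12_jordanR, M13_jordanR, M23_jordanR]
  simp only [cons_mul, Nat.succ_eq_add_one, Nat.reduceAdd, vecMul_cons, head_cons, one_smul,
    tail_cons, zero_smul, neg_smul, smul_cons, smul_eq_mul, mul_zero, mul_one, mul_neg, smul_empty,
    neg_cons, neg_zero, neg_neg, neg_empty, empty_vecMul, add_zero, zero_add, add_cons,
    empty_add_empty, neg_add_cancel, add_neg_cancel, empty_mul, Equiv.symm_apply_apply,
    neg_add_cancel_left, EmbeddingLike.apply_eq_iff_eq, vecCons_inj, add_left_inj, and_true, true_and]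
  and_intros <;> ring

end YangBaxter

theorem stmt7 (h : ℝ) :
    ∃ R₀ : Matrix (Fin 4) (Fin 4) ℝ,
      Filter.Tendsto
        (fun q : ℝ =>
          (GG (gmat (h / (1 - q))))⁻¹ * Rq q * GG (gmat (h / (1 - q))))
        (nhdsWithin 1 {1}ᶜ) (nhds R₀) ∧
      QYBE R₀ ∧ R₀ * (P4 ℝ * R₀ * P4 ℝ) = 1 :=
  ⟨jordanR h, tendsto_inv_GG_gmat_mul_Rq_mul_GG_gmat h, qybe_jordanR h,
    jordanR_mul_P4_mul_jordanR_mul_P4 h⟩
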